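/- Let H = kG be the group Hopf algebra of a group G, and let A be a G-graded algebra with its canonical kG-comodule algebra structure δ(a) = a ⊗ g for a ∈ A_g. Then the extension A_e = A^{co H} ⊆ A is Hopf-Galois (i.e. the canonical map A ⊗_{A_e} A → A ⊗ H, a ⊗ b ↦ (a ⊗ 1)δ(b), is bijective) if and only if A is strongly G-graded. -/

import Mathlib

/-!
If `A` is strongly graded, pick for every `g` a tensor `t g ∈ A_{g⁻¹} ⊗ A_g` whose product is `1`.
Then `x ⊗ g ↦ (x ⊗ 1)·t g` is a right inverse `σ` of the canonical map, and `w - σ (can w)` is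
always balanced: for `b ∈ A_h` and `c ∈ A_{h⁻¹}` the element `b c` has degree `e`, so it may be
moved across the tensor sign. Conversely, the degree-`e` part of the `g`-coefficient of anything
in the image of the canonical map lies in `A_{g⁻¹} A_g`, while `1 ⊗ g` is in the image.
-/

open TensorProduct

section

variable (k R G : Type*) [Field k] [Ring R] [Algebra k R] [Group G] [DecidableEq G]
variable (A : G → Submodule k R) [DirectSum.Decomposition A]

/-- The canonical `kG`-coaction on a `G`-graded algebra: `δ(a) = a ⊗ g` for
`a ∈ A_g`, extended linearly, with values in `A ⊗ kG`
(here `kG = MonoidAlgebra k G` is the group Hopf algebra). -/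
noncomputable def coactionKG : R →ₗ[k] R ⊗[k] MonoidAlgebra k G :=
  (DirectSum.toModule k G (R ⊗[k] MonoidAlgebra k G) fun g =>
      ((TensorProduct.mk k R (MonoidAlgebra k G)).flip
        (MonoidAlgebra.single g 1)) ∘ₗ (A g).subtype) ∘ₗ
    (DirectSum.decomposeLinearEquiv A).toLinearMap

/-- The canonical (Hopf–Galois) map `A ⊗ A → A ⊗ kG`, `a ⊗ b ↦ (a ⊗ 1)·δ(b)`,
as a `k`-linear map on `A ⊗_k A`. -/
noncomputable def canonicalMapKG : R ⊗[k] R →ₗ[k] R ⊗[k] MonoidAlgebra k G :=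
  TensorProduct.lift
    (((LinearMap.mul k (R ⊗[k] MonoidAlgebra k G)).comp
        (Algebra.TensorProduct.includeLeft (R := k) (S := k)).toLinearMap).compl₂
      (coactionKG k R G A))

namespace MulGraded

open DirectSum

variable {ι K S : Type*} [DecidableEq ι] [CommSemiring K] [Semiring S] [Algebra K S]
  (𝒜 : ι → Submodule K S) [Decomposition 𝒜]

theorem coe_decompose_mul_of_left_mem [Mul ι] [IsLeftCancelMul ι]
    (h𝒜 : ∀ i j, 𝒜 i * 𝒜 j ≤ 𝒜 (i * j)) {a : S} {i : ι} (ha : a ∈ 𝒜 i) (b : S) (j : ι) :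
    (decompose 𝒜 (a * b) (i * j) : S) = a * decompose 𝒜 b j := by
  induction b using Decomposition.inductionOn 𝒜 with
  | zero => simp
  | @homogeneous l m =>
    have hm : a * m ∈ 𝒜 (i * l) := h𝒜 i l (Submodule.mul_mem_mul ha m.2)
    by_cases hlj : l = j
    · subst hlj
      rw [decompose_of_mem_same 𝒜 hm, decompose_coe, of_eq_same]
    · rw [decompose_of_mem_ne 𝒜 hm ((mul_right_injective i).ne hlj),
        decompose_of_mem_ne 𝒜 m.2 hlj, mul_zero]
  | add x y hx hy => simp [mul_add, hx, hy]

theorem coe_decompose_mul_of_right_mem [Mul ι] [IsRightCancelMul ι]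
    (h𝒜 : ∀ i j, 𝒜 i * 𝒜 j ≤ 𝒜 (i * j)) {b : S} {j : ι} (hb : b ∈ 𝒜 j) (a : S) (i : ι) :
    (decompose 𝒜 (a * b) (i * j) : S) = decompose 𝒜 a i * b := by
  induction a using Decomposition.inductionOn 𝒜 with
  | zero => simp
  | @homogeneous l m =>
    have hm : m * b ∈ 𝒜 (l * j) := h𝒜 l j (Submodule.mul_mem_mul m.2 hb)
    by_cases hli : l = i
    · subst hli
      rw [decompose_of_mem_same 𝒜 hm, decompose_coe, of_eq_same]
    · rw [decompose_of_mem_ne 𝒜 hm ((mul_left_injective j).ne hli),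
        decompose_of_mem_ne 𝒜 m.2 hli, zero_mul]
  | add x y hx hy => simp [add_mul, hx, hy]

/-- The degree-`1` component `e` of `1` is a right unit on homogeneous elements, hence `e = 1`. -/
theorem one_mem [MulOneClass ι] [IsLeftCancelMul ι] (h𝒜 : ∀ i j, 𝒜 i * 𝒜 j ≤ 𝒜 (i * j)) :
    (1 : S) ∈ 𝒜 1 := by
  have hunit : ∀ a : S, a * decompose 𝒜 1 1 = a := by
    intro a
    induction a using Decomposition.inductionOn 𝒜 with
    | zero => exact zero_mul _
    | @homogeneous i m =>
      have := coe_decompose_mul_of_left_mem 𝒜 h𝒜 m.2 1 1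
      rwa [mul_one, mul_one, decompose_coe, of_eq_same, eq_comm] at this
    | add x y hx hy => rw [add_mul, hx, hy]
  have he : (decompose 𝒜 (1 : S) 1 : S) = 1 := by simpa using hunit 1
  exact he ▸ (decompose 𝒜 (1 : S) 1).2

theorem mul_eq_iff_one_mem_inv_mul [Group ι] (h𝒜 : ∀ i j, 𝒜 i * 𝒜 j ≤ 𝒜 (i * j)) :
    (∀ i j, 𝒜 i * 𝒜 j = 𝒜 (i * j)) ↔ ∀ i, (1 : S) ∈ 𝒜 i⁻¹ * 𝒜 i := by
  refine ⟨fun h i => ?_, fun h i j => le_antisymm (h𝒜 i j) fun x hx => ?_⟩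
  · rw [h, inv_mul_cancel]
    exact one_mem 𝒜 h𝒜
  · have h1 : (1 : S) ∈ 𝒜 i * 𝒜 i⁻¹ := by simpa using h i⁻¹
    have hle : 𝒜 i⁻¹ * 𝒜 (i * j) ≤ 𝒜 j := by simpa using h𝒜 i⁻¹ (i * j)
    have := Submodule.mul_mem_mul h1 hx
    rw [one_mul, mul_assoc] at this
    exact mul_le_mul_right hle (𝒜 i) this

noncomputable def proj (i : ι) : S →ₗ[K] S :=
  (𝒜 i).subtype ∘ₗ component K ι (fun i => 𝒜 i) i ∘ₗ (decomposeLinearEquiv 𝒜).toLinearMap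

theorem proj_apply (i : ι) (x : S) : proj 𝒜 i x = decompose 𝒜 x i := rfl

end MulGraded

theorem DirectSum.Decomposition.eq_top_of_tmul_mem {ι K M N : Type*} [DecidableEq ι]
    [CommSemiring K] [AddCommMonoid M] [Module K M] [AddCommMonoid N] [Module K N]
    (𝒩 : ι → Submodule K N) [Decomposition 𝒩] {p : Submodule K (M ⊗[K] N)}
    (h : ∀ (m : M) (n : N) (i : ι), n ∈ 𝒩 i → m ⊗ₜ[K] n ∈ p) : p = ⊤ := by
  refine Submodule.eq_top_iff'.mpr fun w => ?_
  induction w using TensorProduct.induction_on with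
  | zero => exact p.zero_mem
  | add u v hu hv => exact p.add_mem hu hv
  | tmul m n =>
    have hle : ⨆ i, 𝒩 i ≤ p.comap (TensorProduct.mk K M N m) := iSup_le fun i n hn => h m n i hn
    rw [(Decomposition.isInternal 𝒩).submodule_iSup_eq_top] at hle
    exact hle Submodule.mem_top

section CanonicalMap

open DirectSum MonoidAlgebra

variable {k R G}

omit [Group G] in
theorem coactionKG_of_mem {r : R} {g : G} (hr : r ∈ A g) :
    coactionKG k R G A r = r ⊗ₜ[k] single g 1 := by
  simp only [coactionKG, LinearMap.coe_comp, Function.comp_apply, LinearEquiv.coe_coe,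
    decomposeLinearEquiv_apply, decompose_of_mem A hr, ← lof_eq_of k, toModule_lof]
  rfl

theorem canonicalMapKG_tmul (a b : R) :
    canonicalMapKG k R G A (a ⊗ₜ[k] b) = (a ⊗ₜ[k] 1) * coactionKG k R G A b := rfl

theorem canonicalMapKG_tmul_of_mem {b : R} {g : G} (hb : b ∈ A g) (a : R) :
    canonicalMapKG k R G A (a ⊗ₜ[k] b) = (a * b) ⊗ₜ[k] single g 1 := by
  rw [canonicalMapKG_tmul, coactionKG_of_mem A hb, Algebra.TensorProduct.tmul_mul_tmul, one_mul]

theorem canonicalMapKG_tmul_one_mul (x : R) (w : R ⊗[k] R) :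
    canonicalMapKG k R G A ((x ⊗ₜ[k] 1) * w) = (x ⊗ₜ[k] 1) * canonicalMapKG k R G A w := by
  induction w using TensorProduct.induction_on with
  | zero => simp
  | add u v hu hv => rw [mul_add, map_add, hu, hv, map_add, mul_add]
  | tmul a b =>
    rw [Algebra.TensorProduct.tmul_mul_tmul, one_mul, canonicalMapKG_tmul, canonicalMapKG_tmul,
      ← mul_assoc, Algebra.TensorProduct.tmul_mul_tmul, one_mul]

theorem canonicalMapKG_map_subtype {M : Submodule k R} {g : G} (t : M ⊗[k] A g) :
    canonicalMapKG k R G A (TensorProduct.map M.subtype (A g).subtype t) =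
      Submodule.mulMap M (A g) t ⊗ₜ[k] single g 1 := by
  induction t using TensorProduct.induction_on with
  | zero => simp
  | add u v hu hv => rw [map_add, map_add, hu, hv, map_add, TensorProduct.add_tmul]
  | tmul c d => exact canonicalMapKG_tmul_of_mem A d.2 c

/-- The kernel of `A ⊗_k A → A ⊗_{A_e} A`. -/
def balancingSubmodule : Submodule k (R ⊗[k] R) :=
  Submodule.span k {z : R ⊗[k] R |
    ∃ (a b : R), ∃ s ∈ A (1 : G), z = (a * s) ⊗ₜ[k] b - a ⊗ₜ[k] (s * b)}

variable {A}

theorem balancingSubmodule_le_ker (hA : ∀ g h : G, A g * A h ≤ A (g * h)) :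
    balancingSubmodule A ≤ LinearMap.ker (canonicalMapKG k R G A) := by
  rw [balancingSubmodule, Submodule.span_le]
  rintro _ ⟨a, b, s, hs, rfl⟩
  let balance : R ⊗[k] R →ₗ[k] R ⊗[k] R :=
    (LinearMap.mulRight k s).rTensor R - (LinearMap.mulLeft k s).lTensor R
  have key : (LinearMap.ker (canonicalMapKG k R G A)).comap balance = ⊤ := by
    refine Decomposition.eq_top_of_tmul_mem A fun x y h hy => ?_
    have hsy : s * y ∈ A h := by simpa using hA 1 h (Submodule.mul_mem_mul hs hy)
    simp [balance, canonicalMapKG_tmul_of_mem A hy, canonicalMapKG_tmul_of_mem A hsy, mul_assoc]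
  simpa [balance] using Submodule.eq_top_iff'.mp key (a ⊗ₜ[k] b)

theorem one_mem_inv_mul_of_surjective (hA : ∀ g h : G, A g * A h ≤ A (g * h))
    (hsurj : Function.Surjective (canonicalMapKG k R G A)) (g : G) :
    (1 : R) ∈ A g⁻¹ * A g := by
  let π : R ⊗[k] MonoidAlgebra k G →ₗ[k] R := MulGraded.proj A 1 ∘ₗ
    TensorProduct.rid k R ∘ₗ ((MonoidAlgebra.basis G k).coord g).lTensor R
  have hπ : ∀ (x : R) (h : G), π (x ⊗ₜ[k] single h 1) =
      if h = g then (decompose A x 1 : R) else 0 := by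
    intro x h
    rw [← MonoidAlgebra.basis_apply]
    simp only [π, LinearMap.coe_comp, Function.comp_apply, LinearMap.lTensor_tmul,
      Module.Basis.coord_apply, Module.Basis.repr_self, LinearEquiv.coe_coe,
      TensorProduct.rid_tmul, Finsupp.single_apply]
    split_ifs <;> simp [MulGraded.proj_apply]
  have hrange : (A g⁻¹ * A g).comap (π ∘ₗ canonicalMapKG k R G A) = ⊤ := by
    refine Decomposition.eq_top_of_tmul_mem A fun a b h hb => ?_
    simp only [Submodule.mem_comap, LinearMap.comp_apply, canonicalMapKG_tmul_of_mem A hb, hπ]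
    split_ifs with hhg
    · subst hhg
      rw [← inv_mul_cancel h, MulGraded.coe_decompose_mul_of_right_mem A hA hb]
      exact Submodule.mul_mem_mul (SetLike.coe_mem _) hb
    · exact zero_mem _
  obtain ⟨w, hw⟩ := hsurj (1 ⊗ₜ[k] single g 1)
  simpa [hw, hπ, decompose_of_mem_same A (MulGraded.one_mem A hA)] using
    Submodule.eq_top_iff'.mp hrange w

omit [DecidableEq G] [Decomposition A] in
theorem mul_map_subtype_sub_tmul_mem_balancingSubmodule
    (hA : ∀ g h : G, A g * A h ≤ A (g * h)) {b : R} {g : G} (hb : b ∈ A g) (a : R)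
    (t : A g⁻¹ ⊗[k] A g) :
    ((a * b) ⊗ₜ[k] 1) * TensorProduct.map (A g⁻¹).subtype (A g).subtype t -
      a ⊗ₜ[k] (b * Submodule.mulMap (A g⁻¹) (A g) t) ∈ balancingSubmodule A := by
  induction t using TensorProduct.induction_on with
  | zero => simp
  | add u v hu hv =>
    rw [map_add, mul_add, map_add, mul_add, TensorProduct.tmul_add, add_sub_add_comm]
    exact add_mem hu hv
  | tmul c d =>
    have hbc : b * c ∈ A 1 := by simpa using hA g g⁻¹ (Submodule.mul_mem_mul hb c.2)
    refine Submodule.subset_span ⟨a, d, b * c, hbc, ?_⟩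
    simp [mul_assoc]

variable (t : ∀ g : G, A g⁻¹ ⊗[k] A g)

noncomputable def canonicalSection : R ⊗[k] MonoidAlgebra k G →ₗ[k] R ⊗[k] R :=
  TensorProduct.lift
    (((LinearMap.mul k (R ⊗[k] R)).comp
        (Algebra.TensorProduct.includeLeft (R := k) (S := k)).toLinearMap).compl₂
      ((MonoidAlgebra.basis G k).constr k fun g =>
        TensorProduct.map (A g⁻¹).subtype (A g).subtype (t g)))

omit [DecidableEq G] [Decomposition A] in
theorem canonicalSection_tmul_single (x : R) (g : G) :
    canonicalSection t (x ⊗ₜ[k] single g 1) =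
      (x ⊗ₜ[k] 1) * TensorProduct.map (A g⁻¹).subtype (A g).subtype (t g) := by
  simp only [canonicalSection, TensorProduct.lift.tmul, LinearMap.compl₂_apply,
    LinearMap.comp_apply, AlgHom.toLinearMap_apply, Algebra.TensorProduct.includeLeft_apply,
    LinearMap.mul_apply', ← basis_apply, Module.Basis.constr_basis]

variable {t} (ht : ∀ g, Submodule.mulMap (A g⁻¹) (A g) (t g) = 1)
include ht

theorem canonicalMapKG_canonicalSection (w : R ⊗[k] MonoidAlgebra k G) :
    canonicalMapKG k R G A (canonicalSection t w) = w := by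
  have hsingle : ∀ g : G, canonicalMapKG k R G A (canonicalSection t (1 ⊗ₜ[k] single g 1)) =
      1 ⊗ₜ[k] single g 1 := fun g => by
    rw [canonicalSection_tmul_single, ← Algebra.TensorProduct.one_def, one_mul,
      canonicalMapKG_map_subtype, ht]
  have hone : canonicalMapKG k R G A ∘ₗ canonicalSection t ∘ₗ TensorProduct.mk k R _ 1 =
      TensorProduct.mk k R _ 1 :=
    (MonoidAlgebra.basis G k).ext fun g => by simpa using hsingle g
  induction w using TensorProduct.induction_on with
  | zero => simp
  | add u v hu hv => rw [map_add, map_add, hu, hv]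
  | tmul x f =>
    have hx : canonicalSection t (x ⊗ₜ[k] f) = (x ⊗ₜ[k] 1) * canonicalSection t (1 ⊗ₜ[k] f) := by
      simp [canonicalSection, ← Algebra.TensorProduct.one_def]
    have hf := LinearMap.congr_fun hone f
    simp only [LinearMap.comp_apply, TensorProduct.mk_apply] at hf
    rw [hx, canonicalMapKG_tmul_one_mul, hf, Algebra.TensorProduct.tmul_mul_tmul, mul_one, one_mul]

theorem sub_canonicalSection_mem_balancingSubmodule (hA : ∀ g h : G, A g * A h ≤ A (g * h))
    (w : R ⊗[k] R) :
    w - canonicalSection t (canonicalMapKG k R G A w) ∈ balancingSubmodule A := by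
  have key : (balancingSubmodule A).comap
      (LinearMap.id - canonicalSection t ∘ₗ canonicalMapKG k R G A) = ⊤ := by
    refine Decomposition.eq_top_of_tmul_mem A fun a b g hb => ?_
    have := mul_map_subtype_sub_tmul_mem_balancingSubmodule hA hb a (t g)
    rw [ht, mul_one, ← neg_mem_iff, neg_sub] at this
    simpa [canonicalMapKG_tmul_of_mem A hb, canonicalSection_tmul_single] using this
  simpa using Submodule.eq_top_iff'.mp key w

theorem ker_le_balancingSubmodule (hA : ∀ g h : G, A g * A h ≤ A (g * h)) :
    LinearMap.ker (canonicalMapKG k R G A) ≤ balancingSubmodule A := fun w hw => by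
  simpa [LinearMap.mem_ker.mp hw] using sub_canonicalSection_mem_balancingSubmodule ht hA w

end CanonicalMap

/-- Let `H = kG` be the group Hopf algebra of `G` and `A` a `G`-graded algebra with
its canonical `kG`-comodule algebra structure `δ(a) = a ⊗ g` for `a ∈ A_g`.  The
extension `A_e = A^{co H} ⊆ A` is Hopf–Galois — i.e. the canonical map
`A ⊗_{A_e} A → A ⊗ H`, `a ⊗ b ↦ (a ⊗ 1)δ(b)`, is bijective, where
`A ⊗_{A_e} A` is the quotient of `A ⊗_k A` by the balancing submodule generated
by `(a·s) ⊗ b - a ⊗ (s·b)`, `s ∈ A_e` — if and only if `A` is strongly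
`G`-graded. -/
theorem hopf_galois_iff_strongly_graded
    (hA : ∀ g h : G, A g * A h ≤ A (g * h)) :
    (Function.Surjective (canonicalMapKG k R G A) ∧
      LinearMap.ker (canonicalMapKG k R G A) =
        Submodule.span k {z : R ⊗[k] R |
          ∃ (a b : R), ∃ s ∈ A (1 : G), z = (a * s) ⊗ₜ[k] b - a ⊗ₜ[k] (s * b)}) ↔
    (∀ g h : G, A g * A h = A (g * h)) := by
  rw [MulGraded.mul_eq_iff_one_mem_inv_mul A hA]
  refine ⟨fun ⟨hsurj, _⟩ => one_mem_inv_mul_of_surjective hA hsurj, fun hone => ?_⟩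
  choose t ht using fun g => (Submodule.mulMap_range (A g⁻¹) (A g)).ge (hone g)
  exact ⟨fun w => ⟨_, canonicalMapKG_canonicalSection ht w⟩,
    le_antisymm (ker_le_balancingSubmodule ht hA) (balancingSubmodule_le_ker hA)⟩

end
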